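/- (Closure under strict rules.) Let Δ = (𝒜, 𝒞, ⪯) be a well-defined SAF or well-defined c-SAF with ⪯ reasonable, and let E be an att-complete extension of Δ. Then {Conc(A) : A ∈ E} = Cl_Rs({Conc(A) : A ∈ E}). -/

import Mathlib

namespace ASPIC

/-- An inference rule over the language `L`: a list of antecedents and a consequent. -/
structure InfRule (L : Type) where
  ants : List L
  cons : L

/-- An ASPIC+ argumentation system: a contrariness function, disjoint sets of strict
and defeasible inference rules, and a naming function for (defeasible) rules;
every formula has at least one contradictory. -/
structure ArgSystem (L : Type) where
  contr : L → Set L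
  Rs : Set (InfRule L)
  Rd : Set (InfRule L)
  nm : InfRule L → L
  hdisj : Rs ∩ Rd = ∅
  hcontrad : ∀ φ : L, ∃ ψ : L, ψ ∈ contr φ ∧ φ ∈ contr ψ

/-- A knowledge base: disjoint axioms `Kn` and ordinary premises `Kp`. -/
structure KB (L : Type) where
  Kn : Set L
  Kp : Set L
  hdisj : Kn ∩ Kp = ∅

/-- Argument trees: a premise, or the application of an inference rule to a list of
sub-arguments.  (All such trees are finite.) -/
inductive Arg (L : Type) : Type where
  | prem : L → Arg L
  | app : List (Arg L) → InfRule L → Arg L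

namespace Arg

variable {L : Type}

/-- The conclusion of an argument. -/
def conc : Arg L → L
  | prem φ => φ
  | app _ r => r.cons

/-- The top rule of an argument (none for premises). -/
def topRule : Arg L → Option (InfRule L)
  | prem _ => none
  | app _ r => some r

mutual
  /-- The premises of an argument. -/
  def premises : Arg L → Set L
    | prem φ => {φ}
    | app l _ => premisesL l
  def premisesL : List (Arg L) → Set L
    | [] => ∅
    | a :: as => premises a ∪ premisesL as
end

mutual
  /-- The sub-arguments of an argument (including itself). -/
  def subs : Arg L → Set (Arg L)
    | prem φ => {Arg.prem φ}
    | app l r => subsL l ∪ {Arg.app l r}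
  def subsL : List (Arg L) → Set (Arg L)
    | [] => ∅
    | a :: as => subs a ∪ subsL as
end

mutual
  /-- The rules occurring in an argument. -/
  def rules : Arg L → Set (InfRule L)
    | prem _ => ∅
    | app l r => rulesL l ∪ {r}
  def rulesL : List (Arg L) → Set (InfRule L)
    | [] => ∅
    | a :: as => rules a ∪ rulesL as
end

mutual
  /-- The last defeasible rules of an argument (relative to the set `Rd` of
  defeasible rules). -/
  def lastDefRules (Rd : Set (InfRule L)) : Arg L → Set (InfRule L)
    | prem _ => ∅
    | app l r =>
        let rest := lastDefRulesL Rd l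
        {x | (r ∈ Rd ∧ x = r) ∨ (r ∉ Rd ∧ x ∈ rest)}
  def lastDefRulesL (Rd : Set (InfRule L)) : List (Arg L) → Set (InfRule L)
    | [] => ∅
    | a :: as => lastDefRules Rd a ∪ lastDefRulesL Rd as
end

end Arg

variable {L : Type}

/-- Well-formed arguments on the basis of an argumentation theory `(AS, K)`. -/
inductive IsArg (AS : ArgSystem L) (K : KB L) : Arg L → Prop where
  | prem {φ : L} : φ ∈ K.Kn ∪ K.Kp → IsArg AS K (.prem φ)
  | app {l : List (Arg L)} {r : InfRule L} :
      (∀ a ∈ l, IsArg AS K a) →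
      r ∈ AS.Rs ∪ AS.Rd →
      l.map Arg.conc = r.ants →
      IsArg AS K (.app l r)

/-- The defeasible rules of an argument. -/
def defRules (AS : ArgSystem L) (A : Arg L) : Set (InfRule L) := A.rules ∩ AS.Rd
/-- The strict rules of an argument. -/
def stRules (AS : ArgSystem L) (A : Arg L) : Set (InfRule L) := A.rules ∩ AS.Rs
/-- The ordinary premises of an argument. -/
def premP (K : KB L) (A : Arg L) : Set L := A.premises ∩ K.Kp
/-- The axiom premises of an argument. -/
def premN (K : KB L) (A : Arg L) : Set L := A.premises ∩ K.Kn
/-- An argument is strict if it uses no defeasible rules. -/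
def strictArg (AS : ArgSystem L) (A : Arg L) : Prop := defRules AS A = ∅
/-- An argument is firm if all its premises are axioms. -/
def firmArg (K : KB L) (A : Arg L) : Prop := A.premises ⊆ K.Kn

/-- `φ` is a contrary of `ψ`. -/
def contrary (AS : ArgSystem L) (φ ψ : L) : Prop := φ ∈ AS.contr ψ ∧ ψ ∉ AS.contr φ
/-- `φ` and `ψ` are contradictories of each other. -/
def contrad (AS : ArgSystem L) (φ ψ : L) : Prop := φ ∈ AS.contr ψ ∧ ψ ∈ AS.contr φ

/-- Strict derivability: `SDer AS S φ` iff there is a strict argument for `φ` all of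
whose premises lie in `S` (`S ⊢ φ`). -/
inductive SDer (AS : ArgSystem L) (S : Set L) : L → Prop where
  | prem {φ : L} : φ ∈ S → SDer AS S φ
  | rule {r : InfRule L} : r ∈ AS.Rs → (∀ ψ ∈ r.ants, SDer AS S ψ) → SDer AS S r.cons

/-- `S` is c-consistent: for no pair of contradictories are both strictly derivable. -/
def CCons (AS : ArgSystem L) (S : Set L) : Prop :=
  ∀ φ ψ : L, contrad AS φ ψ → ¬ (SDer AS S φ ∧ SDer AS S ψ)

/-- `S` is minimally c-inconsistent. -/
def MinCIncons (AS : ArgSystem L) (S : Set L) : Prop :=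
  ¬ CCons AS S ∧ ∀ S' ⊂ S, CCons AS S'

/-- Closure under strict rules. -/
inductive ClRs (AS : ArgSystem L) (S : Set L) : L → Prop where
  | base {φ : L} : φ ∈ S → ClRs AS S φ
  | step {r : InfRule L} : r ∈ AS.Rs → (∀ ψ ∈ r.ants, ClRs AS S ψ) → ClRs AS S r.cons

/-- Direct consistency of a set of formulas. -/
def Consistent (AS : ArgSystem L) (S : Set L) : Prop :=
  ¬ ∃ φ ψ : L, φ ∈ S ∧ ψ ∈ S ∧ ψ ∈ AS.contr φ

/-- The argumentation theory is closed under contraposition. -/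
def ContraClosed (AS : ArgSystem L) : Prop :=
  ∀ (S : Set L) (s : L), s ∈ S → ∀ φ : L, SDer AS S φ →
    ∀ nφ : L, contrad AS φ nφ →
      ∃ ns : L, contrad AS s ns ∧ SDer AS ((S \ {s}) ∪ {nφ}) ns

/-- The argumentation theory is closed under transposition. -/
def TransClosed (AS : ArgSystem L) : Prop :=
  ∀ r ∈ AS.Rs, ∀ i : Fin r.ants.length, ∀ nψ : L, contrad AS r.cons nψ →
    ∃ nφ : L, contrad AS (r.ants.get i) nφ ∧
      ({ ants := r.ants.set i.1 nψ, cons := nφ } : InfRule L) ∈ AS.Rs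

/-- Axiom consistency: the strict closure of the axioms is consistent. -/
def AxiomConsistent (AS : ArgSystem L) (K : KB L) : Prop :=
  Consistent AS {φ | ClRs AS K.Kn φ}

/-- c-classicality. -/
def CClassical (AS : ArgSystem L) : Prop :=
  ∀ S : Set L, MinCIncons AS S → ∀ φ ∈ S,
    ∃ nφ : L, contrad AS φ nφ ∧ SDer AS (S \ {φ}) nφ

/-- Well-formedness: contraried formulas are neither axioms nor consequents of strict rules. -/
def WellFormed (AS : ArgSystem L) (K : KB L) : Prop :=
  ∀ φ ψ : L, contrary AS φ ψ → ψ ∉ K.Kn ∧ ∀ r ∈ AS.Rs, r.cons ≠ ψ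

/-- Well-definedness for SAFs. -/
def WellDefinedSAF (AS : ArgSystem L) (K : KB L) : Prop :=
  AxiomConsistent AS K ∧ WellFormed AS K ∧ (ContraClosed AS ∨ TransClosed AS)

/-- Well-definedness for c-SAFs. -/
def WellDefinedCSAF (AS : ArgSystem L) (K : KB L) : Prop :=
  WellDefinedSAF AS K ∧ CClassical AS

/-- The arguments of the SAF defined by `(AS,K)`: all (finite) arguments. -/
def ArgsSAF (AS : ArgSystem L) (K : KB L) : Set (Arg L) := {A | IsArg AS K A}

/-- The arguments of the c-SAF defined by `(AS,K)`: all (finite) c-consistent arguments. -/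
def ArgsCSAF (AS : ArgSystem L) (K : KB L) : Set (Arg L) :=
  {A | IsArg AS K A ∧ CCons AS A.premises}

/-- `A` undercuts `B` on `B'`. -/
def undercutsOn (AS : ArgSystem L) (A B B' : Arg L) : Prop :=
  B' ∈ B.subs ∧ ∃ r ∈ AS.Rd, B'.topRule = some r ∧ A.conc ∈ AS.contr (AS.nm r)

/-- `A` rebuts `B` on `B'`. -/
def rebutsOn (AS : ArgSystem L) (A B B' : Arg L) : Prop :=
  B' ∈ B.subs ∧ ∃ r ∈ AS.Rd, B'.topRule = some r ∧ A.conc ∈ AS.contr B'.conc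

/-- `A` undermines `B` on `B'`. -/
def underminesOn (AS : ArgSystem L) (K : KB L) (A B B' : Arg L) : Prop :=
  B' ∈ B.subs ∧ ∃ φ ∈ K.Kp, B' = Arg.prem φ ∧ A.conc ∈ AS.contr φ

/-- `A` attacks `B` on `B'`. -/
def attacksOn (AS : ArgSystem L) (K : KB L) (A B B' : Arg L) : Prop :=
  undercutsOn AS A B B' ∨ rebutsOn AS A B B' ∨ underminesOn AS K A B B'

/-- `A` attacks `B`. -/
def attacks (AS : ArgSystem L) (K : KB L) (A B : Arg L) : Prop :=
  ∃ B', attacksOn AS K A B B'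

/-- Preference-independent attacks: undercuts, contrary-rebuts and contrary-undermines. -/
def prefIndepOn (AS : ArgSystem L) (K : KB L) (A B B' : Arg L) : Prop :=
  undercutsOn AS A B B' ∨
  (rebutsOn AS A B B' ∧ contrary AS A.conc B'.conc) ∨
  (underminesOn AS K A B B' ∧ contrary AS A.conc B'.conc)

/-- Preference-dependent attacks. -/
def prefDepOn (AS : ArgSystem L) (K : KB L) (A B B' : Arg L) : Prop :=
  attacksOn AS K A B B' ∧ ¬ prefIndepOn AS K A B B'

/-- The strict counterpart `≺` of an ordering `⪯`. -/
def sprec (pre : Arg L → Arg L → Prop) (X Y : Arg L) : Prop := pre X Y ∧ ¬ pre Y X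

/-- `A` defeats `B`, relative to a strict preference relation `slt` (`≺`). -/
def defeats (AS : ArgSystem L) (K : KB L) (slt : Arg L → Arg L → Prop) (A B : Arg L) : Prop :=
  ∃ B', prefIndepOn AS K A B B' ∨ (prefDepOn AS K A B B' ∧ ¬ slt A B')

/-- `A` is a strict continuation of the set of arguments `Γ`. -/
def StrictCont (AS : ArgSystem L) (K : KB L) (A : Arg L) (Γ : Set (Arg L)) : Prop :=
  premP K A = (⋃ B ∈ Γ, premP K B) ∧
  defRules AS A = (⋃ B ∈ Γ, defRules AS B) ∧
  (⋃ B ∈ Γ, stRules AS B) ⊆ stRules AS A ∧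
  (⋃ B ∈ Γ, premN K B) ⊆ premN K A

/-- `B'` has a fallible top: a defeasible top rule, or an ordinary premise. -/
def fallibleTop (AS : ArgSystem L) (K : KB L) (B' : Arg L) : Prop :=
  (∃ r ∈ AS.Rd, B'.topRule = some r) ∨ (∃ φ ∈ K.Kp, B' = Arg.prem φ)

/-- `M(B)`: the maximal fallible sub-arguments of `B`. -/
def MSet (AS : ArgSystem L) (K : KB L) (B : Arg L) : Set (Arg L) :=
  {B' | B' ∈ B.subs ∧ fallibleTop AS K B' ∧
    ¬ ∃ B'', B'' ∈ B.subs ∧ B'' ≠ B ∧ B'' ≠ B' ∧ fallibleTop AS K B'' ∧ B' ∈ B''.subs}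

/-- A reasonable argument ordering. -/
def Reasonable (AS : ArgSystem L) (K : KB L) (pre : Arg L → Arg L → Prop) : Prop :=
  (∀ A B : Arg L, strictArg AS A → firmArg K A →
      (¬ firmArg K B ∨ ¬ strictArg AS B) → sprec pre B A) ∧
  (∀ A B : Arg L, strictArg AS B → firmArg K B → ¬ sprec pre B A) ∧
  (∀ A A' B : Arg L, StrictCont AS K A' {A} →
      (¬ sprec pre A B → ¬ sprec pre A' B) ∧ (¬ sprec pre B A → ¬ sprec pre B A')) ∧
  (∀ s : Finset (Arg L), s.Nonempty → ∀ f : Arg L → Arg L,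
      (∀ C ∈ s, StrictCont AS K (f C) ((↑s : Set (Arg L)) \ {C})) →
      ¬ (∀ C ∈ s, sprec pre (f C) C))

/-- Conflict-freeness of `S` with respect to a relation (attack or defeat). -/
def CFwrt (rel : Arg L → Arg L → Prop) (S : Set (Arg L)) : Prop :=
  ∀ X ∈ S, ∀ Y ∈ S, ¬ rel X Y

/-- `A` is acceptable with respect to `S` (all its defeaters in `𝒜` are defeated from `S`). -/
def Acceptable (𝒜 : Set (Arg L)) (df : Arg L → Arg L → Prop)
    (S : Set (Arg L)) (A : Arg L) : Prop :=
  ∀ B ∈ 𝒜, df B A → ∃ C ∈ S, df C B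

/-- Admissible sets, relative to a conflict-freeness notion `cf` and defeat relation `df`. -/
def Admissible (𝒜 : Set (Arg L)) (cf : Set (Arg L) → Prop)
    (df : Arg L → Arg L → Prop) (S : Set (Arg L)) : Prop :=
  S ⊆ 𝒜 ∧ cf S ∧ ∀ A ∈ S, Acceptable 𝒜 df S A

/-- Complete extensions. -/
def Complete (𝒜 : Set (Arg L)) (cf : Set (Arg L) → Prop)
    (df : Arg L → Arg L → Prop) (S : Set (Arg L)) : Prop :=
  Admissible 𝒜 cf df S ∧ ∀ A ∈ 𝒜, Acceptable 𝒜 df S A → A ∈ S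

/-- Preferred extensions: ⊆-maximal complete extensions. -/
def Preferred (𝒜 : Set (Arg L)) (cf : Set (Arg L) → Prop)
    (df : Arg L → Arg L → Prop) (S : Set (Arg L)) : Prop :=
  Complete 𝒜 cf df S ∧ ∀ S', Complete 𝒜 cf df S' → S ⊆ S' → S' = S

/-- The grounded extension: the ⊆-minimal complete extension. -/
def Grounded (𝒜 : Set (Arg L)) (cf : Set (Arg L) → Prop)
    (df : Arg L → Arg L → Prop) (S : Set (Arg L)) : Prop :=
  Complete 𝒜 cf df S ∧ ∀ S', Complete 𝒜 cf df S' → S ⊆ S'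

/-- Stable extensions. -/
def Stable (𝒜 : Set (Arg L)) (cf : Set (Arg L) → Prop)
    (df : Arg L → Arg L → Prop) (S : Set (Arg L)) : Prop :=
  Preferred 𝒜 cf df S ∧ ∀ B ∈ 𝒜, B ∉ S → ∃ A ∈ S, df A B

/-- The set of antecedents of a rule. -/
def antsSet {L : Type} (r : InfRule L) : Set L := {φ | φ ∈ r.ants}

end ASPIC
/-!
If the antecedents of a strict rule `r` are concluded by arguments `l` of `E`, the argument
`app l r` is defended by `E`: its top rule is strict, so every defeater of it defeats one of
the arguments in `l`. Completeness then puts it into `E`.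

For a c-SAF, `app l r` must also be c-consistent, which follows once the premises of all
arguments of `E` are jointly c-consistent. If they were not, take a finite minimally
c-inconsistent set `T` of them; axiom consistency forces ordinary premises into `T`, and
c-classicality yields for each `ψ ∈ T` a strict argument `C ψ` on `T \ {ψ}` for a
contradictory of `ψ`. Part (2) of reasonableness makes some `C ψ` defeat the argument of `E`
using `ψ`, and any defence of `E` against the strict `C ψ` must undermine a premise in
`T \ {ψ}`, i.e. attack `E` itself.
-/

namespace ASPIC

variable {L : Type}

lemma ArgSystem.notMem_Rd_of_mem_Rs (AS : ArgSystem L) {r : InfRule L} (hr : r ∈ AS.Rs) :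
    r ∉ AS.Rd := fun hd => (Set.eq_empty_iff_forall_notMem.1 AS.hdisj) r ⟨hr, hd⟩

lemma KB.notMem_Kn_of_mem_Kp (K : KB L) {φ : L} (hφ : φ ∈ K.Kp) : φ ∉ K.Kn :=
  fun hn => (Set.eq_empty_iff_forall_notMem.1 K.hdisj) φ ⟨hn, hφ⟩

lemma exists_list_map_eq {α β : Type*} {f : α → β} {Q : α → Prop} :
    ∀ {ys : List β}, (∀ y ∈ ys, ∃ x, Q x ∧ f x = y) → ∃ xs : List α, xs.map f = ys ∧ ∀ x ∈ xs, Q x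
  | [], _ => ⟨[], rfl, by simp⟩
  | y :: ys, h => by
    obtain ⟨x, hx, rfl⟩ := h y (by simp)
    obtain ⟨xs, rfl, hxs⟩ := exists_list_map_eq (ys := ys) fun z hz => h z (by simp [hz])
    exact ⟨x :: xs, rfl, by simpa using ⟨hx, hxs⟩⟩

namespace Arg

@[elab_as_elim]
theorem induction_on {P : Arg L → Prop} (A : Arg L) (prem : ∀ φ, P (.prem φ))
    (app : ∀ l r, (∀ a ∈ l, P a) → P (.app l r)) : P A :=
  match A with
  | .prem φ => prem φ
  | .app l r => app l r fun a _ => induction_on a prem app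

@[simp]
lemma mem_premisesL {φ : L} : ∀ {l : List (Arg L)}, φ ∈ premisesL l ↔ ∃ a ∈ l, φ ∈ a.premises
  | [] => by simp [premisesL]
  | a :: as => by simp [premisesL, mem_premisesL]

@[simp]
lemma mem_subsL {B : Arg L} : ∀ {l : List (Arg L)}, B ∈ subsL l ↔ ∃ a ∈ l, B ∈ a.subs
  | [] => by simp [subsL]
  | a :: as => by simp [subsL, mem_subsL]

@[simp]
lemma mem_rulesL {r : InfRule L} : ∀ {l : List (Arg L)}, r ∈ rulesL l ↔ ∃ a ∈ l, r ∈ a.rules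
  | [] => by simp [rulesL]
  | a :: as => by simp [rulesL, mem_rulesL]

lemma prem_mem_subs_iff {A : Arg L} {φ : L} : prem φ ∈ A.subs ↔ φ ∈ A.premises := by
  induction A using induction_on with
  | prem ψ => simp [subs, premises]
  | app l r ih =>
    simpa [subs, premises] using exists_congr fun a => and_congr_right (ih a)

lemma rules_subset_of_mem_subs {A B : Arg L} (h : B ∈ A.subs) : B.rules ⊆ A.rules := by
  induction A using induction_on with
  | prem ψ =>
    obtain rfl : B = prem ψ := h
    rfl
  | app l r ih =>
    rcases h with h | rfl
    · obtain ⟨a, ha, hBa⟩ := mem_subsL.1 h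
      exact (ih a ha hBa).trans fun x hx => Or.inl (mem_rulesL.2 ⟨a, ha, hx⟩)
    · rfl

lemma topRule_mem_rules {A : Arg L} {r : InfRule L} (h : A.topRule = some r) : r ∈ A.rules := by
  cases A with
  | prem φ => cases h
  | app l r' =>
    cases h
    exact Or.inr rfl

end Arg

lemma IsArg.premises_subset {AS : ArgSystem L} {K : KB L} {A : Arg L} (h : IsArg AS K A) :
    A.premises ⊆ K.Kn ∪ K.Kp := by
  induction h with
  | prem h => simpa [Arg.premises] using h
  | app _ _ _ ih =>
    intro x hx
    obtain ⟨a, ha, hxa⟩ := Arg.mem_premisesL.1 hx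
    exact ih a ha hxa

section StrictDerivability

variable {AS : ArgSystem L}

lemma SDer.mono {S S' : Set L} (hSS' : S ⊆ S') {φ : L} (h : SDer AS S φ) : SDer AS S' φ := by
  induction h with
  | prem h => exact .prem (hSS' h)
  | rule hr _ ih => exact .rule hr ih

lemma SDer.clRs {S T : Set L} (hTS : T ⊆ S) {φ : L} (h : SDer AS T φ) : ClRs AS S φ := by
  induction h with
  | prem h => exact .base (hTS h)
  | rule hr _ ih => exact .step hr ih

lemma SDer.exists_finite {S : Set L} {φ : L} (h : SDer AS S φ) :
    ∃ F ⊆ S, F.Finite ∧ SDer AS F φ := by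
  induction h with
  | prem hφ => exact ⟨{_}, Set.singleton_subset_iff.2 hφ, Set.finite_singleton _, .prem rfl⟩
  | @rule r hr _ ih =>
    choose F hFS hFfin hF using ih
    exact ⟨⋃ ψ, ⋃ h : ψ ∈ r.ants, F ψ h, Set.iUnion₂_subset hFS,
      Set.Finite.biUnion' r.ants.finite_toSet hFfin,
      .rule hr fun ψ hψ => (hF ψ hψ).mono (Set.subset_iUnion₂ (s := fun ψ h => F ψ h) ψ hψ)⟩

lemma SDer.exists_strict_arg (K : KB L) {S : Set L} (hS : S ⊆ K.Kn ∪ K.Kp) {φ : L}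
    (h : SDer AS S φ) :
    ∃ A : Arg L, A.conc = φ ∧ IsArg AS K A ∧ A.premises ⊆ S ∧ A.rules ⊆ AS.Rs ∧
      SDer AS A.premises φ := by
  induction h with
  | prem hφ => exact ⟨.prem _, rfl, .prem (hS hφ), by simpa [Arg.premises] using hφ,
      by simp [Arg.rules], .prem rfl⟩
  | rule hr _ ih =>
    obtain ⟨l, hmap, hl⟩ := exists_list_map_eq (f := Arg.conc) fun ψ hψ => by
      obtain ⟨A, rfl, hA⟩ := ih ψ hψ
      exact ⟨A, hA, rfl⟩
    refine ⟨.app l _, rfl, .app (fun a ha => (hl a ha).1) (Or.inl hr) hmap, ?_, ?_, ?_⟩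
    · intro x hx
      obtain ⟨a, ha, hxa⟩ := Arg.mem_premisesL.1 hx
      exact (hl a ha).2.1 hxa
    · rintro x (hx | rfl)
      · obtain ⟨a, ha, hxa⟩ := Arg.mem_rulesL.1 hx
        exact (hl a ha).2.2.1 hxa
      · exact hr
    · refine .rule hr fun ψ hψ => ?_
      obtain ⟨a, ha, rfl⟩ := List.mem_map.1 (hmap ▸ hψ)
      exact (hl a ha).2.2.2.mono fun x hx => Arg.mem_premisesL.2 ⟨a, ha, hx⟩

lemma CCons.anti {S S' : Set L} (hSS' : S ⊆ S') (h : CCons AS S') : CCons AS S :=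
  fun φ ψ hc ⟨h1, h2⟩ => h φ ψ hc ⟨h1.mono hSS', h2.mono hSS'⟩

lemma exists_minCIncons_subset {U : Set L} (h : ¬ CCons AS U) :
    ∃ T ⊆ U, T.Finite ∧ MinCIncons AS T := by
  simp only [CCons, not_forall, not_not] at h
  obtain ⟨φ, ψ, hc, hφ, hψ⟩ := h
  obtain ⟨F₁, hF₁, hF₁fin, hφ⟩ := hφ.exists_finite
  obtain ⟨F₂, hF₂, hF₂fin, hψ⟩ := hψ.exists_finite
  have hF : ¬ CCons AS (F₁ ∪ F₂) := fun hcc => hcc φ ψ hc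
    ⟨hφ.mono Set.subset_union_left, hψ.mono Set.subset_union_right⟩
  have hfin : {T | T ⊆ F₁ ∪ F₂ ∧ ¬ CCons AS T}.Finite :=
    (hF₁fin.union hF₂fin).finite_subsets.subset fun _ hT => hT.1
  obtain ⟨T, hTF, ⟨-, hT⟩, hmin⟩ := hfin.exists_le_minimal ⟨subset_rfl, hF⟩
  refine ⟨T, hTF.trans (Set.union_subset hF₁ hF₂), (hF₁fin.union hF₂fin).subset hTF, hT, ?_⟩
  intro S hST
  by_contra hS
  exact hST.2 (hmin ⟨hST.1.trans hTF, hS⟩ hST.1)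

lemma ccons_of_subset_Kn {K : KB L} (hax : AxiomConsistent AS K) {T : Set L} (hT : T ⊆ K.Kn) :
    CCons AS T :=
  fun _ _ hc ⟨h₁, h₂⟩ => hax ⟨_, _, h₁.clRs hT, h₂.clRs hT, hc.2⟩

end StrictDerivability

section Attacks

variable {AS : ArgSystem L} {K : KB L}

lemma attacksOn.mem_subs {C B B' : Arg L} (h : attacksOn AS K C B B') : B' ∈ B.subs := by
  rcases h with ⟨h, -⟩ | ⟨h, -⟩ | ⟨h, -⟩ <;> exact h

lemma prefIndepOn.attacksOn {C B B' : Arg L} (h : prefIndepOn AS K C B B') :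
    attacksOn AS K C B B' :=
  h.elim Or.inl fun h => h.elim (fun h => Or.inr (Or.inl h.1)) fun h => Or.inr (Or.inr h.1)

lemma defeatsOn_of_mem_subs {slt : Arg L → Arg L → Prop} {C B B₂ B' : Arg L}
    (hB : B' ∈ B.subs) (hB₂ : B' ∈ B₂.subs)
    (h : prefIndepOn AS K C B B' ∨ (prefDepOn AS K C B B' ∧ ¬ slt C B')) :
    prefIndepOn AS K C B₂ B' ∨ (prefDepOn AS K C B₂ B' ∧ ¬ slt C B') := by
  simpa [prefIndepOn, prefDepOn, attacksOn, undercutsOn, rebutsOn, underminesOn, hB, hB₂] using h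

lemma defeats.exists_attacksOn {slt : Arg L → Arg L → Prop} {C B : Arg L}
    (h : defeats AS K slt C B) : ∃ B', attacksOn AS K C B B' :=
  let ⟨B', h⟩ := h
  ⟨B', h.elim prefIndepOn.attacksOn fun h => h.1.1⟩

lemma not_attacksOn_of_topRule_mem_Rs {C B B' : Arg L} {r : InfRule L}
    (htop : B'.topRule = some r) (hr : r ∈ AS.Rs) : ¬ attacksOn AS K C B B' := by
  rintro (⟨-, r', hr', htop', -⟩ | ⟨-, r', hr', htop', -⟩ | ⟨-, ψ, -, rfl, -⟩)
  · exact AS.notMem_Rd_of_mem_Rs hr (Option.some_injective _ (htop.symm.trans htop') ▸ hr')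
  · exact AS.notMem_Rd_of_mem_Rs hr (Option.some_injective _ (htop.symm.trans htop') ▸ hr')
  · cases htop

lemma underminesOn_prem {C B : Arg L} {ψ : L} (hψ : ψ ∈ K.Kp) (hψB : ψ ∈ B.premises)
    (hC : C.conc ∈ AS.contr ψ) : underminesOn AS K C B (.prem ψ) :=
  ⟨Arg.prem_mem_subs_iff.2 hψB, ψ, hψ, rfl, hC⟩

lemma attacks_of_mem_premises {C B : Arg L} {ψ : L} (hψ : ψ ∈ K.Kp) (hψB : ψ ∈ B.premises)
    (hC : C.conc ∈ AS.contr ψ) : attacks AS K C B :=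
  ⟨_, Or.inr (Or.inr (underminesOn_prem hψ hψB hC))⟩

lemma defeats_of_contrad_premise {slt : Arg L → Arg L → Prop} {C B : Arg L} {ψ : L}
    (hψ : ψ ∈ K.Kp) (hψB : ψ ∈ B.premises) (hC : contrad AS ψ C.conc)
    (hpref : ¬ slt C (.prem ψ)) : defeats AS K slt C B := by
  refine ⟨.prem ψ, Or.inr ⟨⟨Or.inr (Or.inr (underminesOn_prem hψ hψB hC.2)), ?_⟩, hpref⟩⟩
  rintro (⟨-, r, -, htop, -⟩ | ⟨⟨-, r, -, htop, -⟩, -⟩ | ⟨-, hcontrary⟩)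
  · cases htop
  · cases htop
  · exact hcontrary.2 hC.1

lemma attacksOn_strict {C B B' : Arg L} (hB : B.rules ⊆ AS.Rs) (h : attacksOn AS K C B B') :
    ∃ ψ ∈ B.premises ∩ K.Kp, C.conc ∈ AS.contr ψ := by
  cases B' with
  | app l r =>
    exact absurd h (not_attacksOn_of_topRule_mem_Rs rfl
      (hB (Arg.rules_subset_of_mem_subs h.mem_subs (Arg.topRule_mem_rules rfl))))
  | prem ψ =>
    rcases h with ⟨-, r, -, htop, -⟩ | ⟨-, r, -, htop, -⟩ | ⟨hsub, ψ', hψ', heq, hC⟩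
    · cases htop
    · cases htop
    · cases heq
      exact ⟨ψ, ⟨Arg.prem_mem_subs_iff.1 hsub, hψ'⟩, hC⟩

lemma exists_defeats_of_defeats_app {slt : Arg L → Arg L → Prop} {C : Arg L}
    {l : List (Arg L)} {r : InfRule L} (hr : r ∈ AS.Rs) (h : defeats AS K slt C (.app l r)) :
    ∃ a ∈ l, defeats AS K slt C a := by
  obtain ⟨B', hB'⟩ := h
  have hatt : attacksOn AS K C (.app l r) B' := hB'.elim prefIndepOn.attacksOn fun h => h.1.1
  rcases hatt.mem_subs with hsub | rfl
  · obtain ⟨a, ha, hB'a⟩ := Arg.mem_subsL.1 hsub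
    exact ⟨a, ha, B', defeatsOn_of_mem_subs hatt.mem_subs hB'a hB'⟩
  · exact absurd hatt (not_attacksOn_of_topRule_mem_Rs rfl hr)

lemma acceptable_app {𝒜 E : Set (Arg L)} {slt : Arg L → Arg L → Prop} {l : List (Arg L)}
    {r : InfRule L} (hr : r ∈ AS.Rs) (hl : ∀ a ∈ l, Acceptable 𝒜 (defeats AS K slt) E a) :
    Acceptable 𝒜 (defeats AS K slt) E (.app l r) := by
  intro C hC hCB
  obtain ⟨a, ha, hCa⟩ := exists_defeats_of_defeats_app hr hCB
  exact hl a ha C hC hCa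

end Attacks

section CSAF

variable {AS : ArgSystem L} {K : KB L}

lemma strictCont_prem_image {C : Arg L} {S : Set L} (hS : S ⊆ K.Kp) (hC : C.rules ⊆ AS.Rs)
    (hCS : premP K C = S) : StrictCont AS K C (Arg.prem '' S) := by
  refine ⟨?_, ?_, ?_, ?_⟩ <;> simp only [Set.biUnion_image]
  · rw [hCS]
    ext ψ
    simpa [premP, Arg.premises] using fun h => hS h
  · simpa [defRules, Arg.rules] using
      Set.eq_empty_of_forall_notMem fun r hr => AS.notMem_Rd_of_mem_Rs (hC hr.1) hr.2
  · simp [stRules, Arg.rules]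
  · intro φ hφ
    simp only [Set.mem_iUnion, premN, Arg.premises] at hφ
    obtain ⟨ψ, hψ, rfl, hψn⟩ := hφ
    exact absurd hψn (K.notMem_Kn_of_mem_Kp (hS hψ))

lemma Reasonable.exists_not_sprec_prem {pre : Arg L → Arg L → Prop} (hreas : Reasonable AS K pre)
    {S : Set L} (hSfin : S.Finite) (hS : S.Nonempty) (C : L → Arg L)
    (hC : ∀ ψ ∈ S, StrictCont AS K (C ψ) (Arg.prem '' (S \ {ψ}))) :
    ∃ ψ ∈ S, ¬ sprec pre (C ψ) (.prem ψ) := by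
  classical
  have hcoe : ((hSfin.toFinset.image Arg.prem : Finset (Arg L)) : Set (Arg L)) = Arg.prem '' S := by
    simp
  have hinj : Function.Injective (Arg.prem : L → Arg L) := fun _ _ h => Arg.prem.inj h
  have := hreas.2.2.2 (hSfin.toFinset.image Arg.prem) (by simpa using hS) (C ∘ Arg.conc) ?_
  · simpa [Arg.conc] using this
  · simp only [Finset.mem_image, Set.Finite.mem_toFinset, hcoe]
    rintro _ ⟨ψ, hψ, rfl⟩
    simpa [Arg.conc, ← Set.image_singleton, ← Set.image_sdiff hinj] using hC ψ hψ

lemma exists_strict_arg_contrad_of_minCIncons (hcl : CClassical AS) {T : Set L}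
    (hT : MinCIncons AS T) (hTK : T ⊆ K.Kn ∪ K.Kp) {φ : L} (hφ : φ ∈ T) :
    ∃ C : Arg L, IsArg AS K C ∧ C.rules ⊆ AS.Rs ∧ C.premises = T \ {φ} ∧ contrad AS φ C.conc := by
  obtain ⟨nφ, hnφ, hder⟩ := hcl T hT φ hφ
  obtain ⟨C, rfl, hC, hCT, hCs, hCder⟩ :=
    hder.exists_strict_arg K (Set.sdiff_subset.trans hTK)
  refine ⟨C, hC, hCs, hCT.antisymm ?_, hnφ⟩
  -- `insert φ C.premises` is already c-inconsistent, so by minimality it is all of `T`.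
  have hincons : ¬ CCons AS (insert φ C.premises) := fun hcc =>
    hcc φ C.conc hnφ ⟨.prem (Set.mem_insert _ _), hCder.mono (Set.subset_insert _ _)⟩
  have hsub : insert φ C.premises ⊆ T := Set.insert_subset hφ (hCT.trans Set.sdiff_subset)
  obtain heq | hlt := hsub.eq_or_ssubset
  · rw [← heq]
    simp
  · exact absurd (hT.2 _ hlt) hincons

theorem ccons_premises_of_complete {pre : Arg L → Arg L → Prop} (hwd : WellDefinedCSAF AS K)
    (hreas : Reasonable AS K pre) {E : Set (Arg L)}
    (hE : Complete (ArgsCSAF AS K) (CFwrt (attacks AS K)) (defeats AS K (sprec pre)) E) :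
    CCons AS (⋃ A ∈ E, A.premises) := by
  by_contra hincons
  obtain ⟨T, hTE, hTfin, hT⟩ := exists_minCIncons_subset hincons
  have hTK : T ⊆ K.Kn ∪ K.Kp := fun ψ hψ => by
    obtain ⟨A, hA, hψA⟩ := Set.mem_iUnion₂.1 (hTE hψ)
    exact (hE.1.1 hA).1.premises_subset hψA
  have hTKp : (T ∩ K.Kp).Nonempty := by
    by_contra hempty
    exact hT.1 (ccons_of_subset_Kn hwd.1.1 fun ψ hψ =>
      (hTK hψ).resolve_right fun hψp => hempty ⟨ψ, hψ, hψp⟩)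
  have : Nonempty (Arg L) := ⟨.prem hTKp.some⟩
  choose! C hC hCs hCT hCφ using fun ψ (hψ : ψ ∈ T) =>
    exists_strict_arg_contrad_of_minCIncons hwd.2 hT hTK hψ
  obtain ⟨ψ, ⟨hψT, hψp⟩, hpref⟩ := hreas.exists_not_sprec_prem (hTfin.inter_of_left _) hTKp C
    fun ψ hψ => strictCont_prem_image (Set.sdiff_subset.trans Set.inter_subset_right)
      (hCs ψ hψ.1) (by rw [premP, hCT ψ hψ.1, Set.inter_sdiff_right_comm])
  obtain ⟨A, hA, hψA⟩ := Set.mem_iUnion₂.1 (hTE hψT)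
  have hCA : defeats AS K (sprec pre) (C ψ) A :=
    defeats_of_contrad_premise hψp hψA (hCφ ψ hψT) hpref
  have hCargs : C ψ ∈ ArgsCSAF AS K :=
    ⟨hC ψ hψT, hCT ψ hψT ▸ hT.2 _ (Set.sdiff_singleton_ssubset.2 hψT)⟩
  obtain ⟨D, hD, hDC⟩ := hE.1.2.2 A hA (C ψ) hCargs hCA
  obtain ⟨B', hDC⟩ := hDC.exists_attacksOn
  obtain ⟨ρ, ⟨hρC, hρp⟩, hDρ⟩ := attacksOn_strict (hCs ψ hψT) hDC
  obtain ⟨A', hA', hρA'⟩ := Set.mem_iUnion₂.1 (hTE (hCT ψ hψT ▸ hρC).1)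
  exact hE.1.2.1 D hD A' hA' (attacks_of_mem_premises hρp hρA' hDρ)

end CSAF

/-- Theorem: closure under strict rules: in a well-defined (c-)SAF with a
reasonable ordering, the conclusions of an att-complete extension are closed under strict
rules: `{Conc(A) : A ∈ E} = Cl_Rs({Conc(A) : A ∈ E})`. -/
theorem statement5 {L : Type} (AS : ArgSystem L) (K : KB L) (pre : Arg L → Arg L → Prop)
    (𝒜 : Set (Arg L))
    (hcase :
      (𝒜 = ArgsSAF AS K ∧ WellDefinedSAF AS K) ∨
      (𝒜 = ArgsCSAF AS K ∧ WellDefinedCSAF AS K))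
    (hreas : Reasonable AS K pre)
    (E : Set (Arg L))
    (hE : Complete 𝒜 (CFwrt (attacks AS K)) (defeats AS K (sprec pre)) E) :
    Arg.conc '' E = {φ | ClRs AS (Arg.conc '' E) φ} := by
  have hargs : ∀ A ∈ E, IsArg AS K A := by
    rcases hcase with ⟨rfl, -⟩ | ⟨rfl, -⟩
    exacts [fun A hA => hE.1.1 hA, fun A hA => (hE.1.1 hA).1]
  refine Set.Subset.antisymm (fun _ => ClRs.base) fun φ hφ => ?_
  induction hφ with
  | base h => exact h
  | @step r hr _ ih =>
    obtain ⟨l, hmap, hlE⟩ := exists_list_map_eq ih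
    have hB : IsArg AS K (.app l r) := .app (fun a ha => hargs a (hlE a ha)) (Or.inl hr) hmap
    have hB𝒜 : Arg.app l r ∈ 𝒜 := by
      rcases hcase with ⟨rfl, -⟩ | ⟨rfl, hwd⟩
      · exact hB
      · refine ⟨hB, (ccons_premises_of_complete hwd hreas hE).anti fun ψ hψ => ?_⟩
        obtain ⟨a, ha, hψa⟩ := Arg.mem_premisesL.1 hψ
        exact Set.mem_biUnion (hlE a ha) hψa
    exact ⟨_, hE.2 _ hB𝒜 (acceptable_app hr fun a ha => hE.1.2.2 a (hlE a ha)), rfl⟩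

end ASPIC
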